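/- For any d, q ∈ ℕ and any antichain W ⊆ [q]^d (with respect to the coordinatewise order ≼), the sets {H^q_j : j ∈ W ∪ {−∞, ∞}} form a partition of ℝ^d; that is, they are pairwise disjoint and their union is ℝ^d. -/

import Mathlib

/-!
A point of the cell `H^q_{j'}` lying below a point of `H^q_j` forces `j' ≤ j`. Applied to a
single point this separates distinct cells; applied to a point of `H^q_∞` inside a cell of `W`,
the antichain property makes the two indices equal, contradicting the definition of `H^q_∞`.
Since `H^q_{-∞}` is defined as a complement, the remaining claims are bookkeeping.
-/

open Set

/-- The half-open hypercube `H^q_j = ∏_ℓ [(j_ℓ - 1)/q, j_ℓ/q)`. -/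
def Hcube (d q : ℕ) (j : Fin d → ℕ) : Set (Fin d → ℝ) :=
  {x | ∀ ℓ : Fin d, ((j ℓ : ℝ) - 1) / q ≤ x ℓ ∧ x ℓ < (j ℓ : ℝ) / q}

/-- `H^q_∞`: points above some hypercube of the antichain but in none of them. -/
def Hinf (d q : ℕ) (W : Set (Fin d → ℕ)) : Set (Fin d → ℝ) :=
  ⋃ j ∈ W, {x | x ∉ Hcube d q j ∧ ∃ x' ∈ Hcube d q j, x' ≤ x}

/-- `H^q_{-∞}`: the remaining points. -/
def Hneg (d q : ℕ) (W : Set (Fin d → ℕ)) : Set (Fin d → ℝ) :=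
  ((⋃ j ∈ W, Hcube d q j) ∪ Hinf d q W)ᶜ

theorem Nat.le_of_sub_one_div_lt_div {c : ℝ} (hc : 0 < c) {a b : ℕ}
    (h : ((a : ℝ) - 1) / c < b / c) : a ≤ b := by
  have hab : (a : ℝ) < b + 1 := by linarith [(div_lt_div_iff_of_pos_right hc).mp h]
  exact Nat.lt_succ_iff.mp (by exact_mod_cast hab)

theorem Hcube_index_le {d q : ℕ} (hq : 0 < q) {j j' : Fin d → ℕ} {x x' : Fin d → ℝ}
    (hx : x ∈ Hcube d q j) (hx' : x' ∈ Hcube d q j') (hle : x' ≤ x) : j' ≤ j :=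
  fun ℓ => Nat.le_of_sub_one_div_lt_div (Nat.cast_pos.2 hq)
    ((hx' ℓ).1.trans_lt ((hle ℓ).trans_lt (hx ℓ).2))

theorem Hcube_disjoint {d q : ℕ} (hq : 0 < q) {j j' : Fin d → ℕ} (hne : j ≠ j') :
    Disjoint (Hcube d q j) (Hcube d q j') :=
  disjoint_left.2 fun _ hx hx' =>
    hne (le_antisymm (Hcube_index_le hq hx' hx le_rfl) (Hcube_index_le hq hx hx' le_rfl))

theorem Hcube_disjoint_Hinf {d q : ℕ} (hq : 0 < q) {W : Set (Fin d → ℕ)}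
    (hanti : IsAntichain (· ≤ ·) W) {j : Fin d → ℕ} (hj : j ∈ W) :
    Disjoint (Hcube d q j) (Hinf d q W) := by
  refine disjoint_left.2 fun x hx hxinf => ?_
  obtain ⟨j', hj', hxj', x', hx', hle⟩ := mem_iUnion₂.1 hxinf
  exact hxj' (hanti.eq hj' hj (Hcube_index_le hq hx hx' hle) ▸ hx)

theorem statement18 (d q : ℕ) (hq : 0 < q)
    (W : Set (Fin d → ℕ))
    (hanti : IsAntichain (· ≤ ·) W) :
    (∀ j ∈ W, ∀ j' ∈ W, j ≠ j' → Disjoint (Hcube d q j) (Hcube d q j')) ∧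
    (∀ j ∈ W, Disjoint (Hcube d q j) (Hinf d q W)) ∧
    (∀ j ∈ W, Disjoint (Hcube d q j) (Hneg d q W)) ∧
    Disjoint (Hinf d q W) (Hneg d q W) ∧
    ((⋃ j ∈ W, Hcube d q j) ∪ Hinf d q W ∪ Hneg d q W) = Set.univ :=
  ⟨fun _ _ _ _ => Hcube_disjoint hq,
    fun _ hj => Hcube_disjoint_Hinf hq hanti hj,
    fun _ hj => disjoint_compl_right_iff_subset.2
      (subset_union_of_subset_left (subset_biUnion_of_mem hj) _),
    disjoint_compl_right_iff_subset.2 subset_union_right,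
    union_compl_self _⟩
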